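/- Let M be a semigroup generated by a finite set Y, and let N = M ∪ {I} be the monoid obtained from M by adjoining a new identity element I. If N is finite J-above, then for every k ∈ ℕ the set { m ∈ N | h_J(m) = k } is finite. -/
import Mathlib

namespace GreenDefs

variable {M : Type*} [Monoid M]

/-- `a ≤_L b`. -/
def lle (a b : M) : Prop := ∃ u, a = u * b

/-- `a L b`. -/
def lrel (a b : M) : Prop := lle a b ∧ lle b a

/-- `a <_L b`. -/
def llt (a b : M) : Prop := lle a b ∧ ¬ lle b a

/-- `a ≤_R b`. -/
def rle (a b : M) : Prop := ∃ u, a = b * u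

/-- `a R b`. -/
def rrel (a b : M) : Prop := rle a b ∧ rle b a

/-- `a ≤_J b`. -/
def jle (a b : M) : Prop := ∃ u v, a = u * b * v

/-- `a J b`. -/
def jrel (a b : M) : Prop := jle a b ∧ jle b a

/-- `a <_J b`. -/
def jlt (a b : M) : Prop := jle a b ∧ ¬ jle b a

/-- `a H b`. -/
def hrel (a b : M) : Prop := lrel a b ∧ rrel a b

/-- A monoid is stable if `a·x J a` implies `a·x R a` and `x·a J a` implies
`x·a L a`. -/
def Stable (M : Type*) [Monoid M] : Prop :=
  ∀ a x : M, (jrel (a * x) a → rrel (a * x) a) ∧ (jrel (x * a) a → lrel (x * a) a)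

end GreenDefs

open GreenDefs

section Aux

variable {N : Type*} [Monoid N]

lemma jle_refl' (a : N) : jle a a := ⟨1, 1, by simp⟩

lemma jle_trans' {a b c : N} (h1 : jle a b) (h2 : jle b c) : jle a c := by
  obtain ⟨u, v, h1⟩ := h1
  obtain ⟨u', v', h2⟩ := h2
  exact ⟨u * u', v' * v, by rw [h1, h2]; simp [mul_assoc]⟩

lemma jlt_trans' {a b c : N} (h1 : jlt a b) (h2 : jlt b c) : jlt a c :=
  ⟨jle_trans' h1.1 h2.1, fun h => h2.2 (jle_trans' h h1.1)⟩

lemma jrel_refl' (a : N) : jrel a a := ⟨jle_refl' a, jle_refl' a⟩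

lemma jrel_trans' {a b c : N} (h1 : jrel a b) (h2 : jrel b c) : jrel a c :=
  ⟨jle_trans' h1.1 h2.1, jle_trans' h2.2 h1.2⟩

/-- Set of lengths of strict `J`-chains starting at `a`. -/
def chainSet (a : N) : Set ℕ :=
  {n : ℕ | ∃ c : ℕ → N, c 0 = a ∧ ∀ i < n, jlt (c i) (c (i + 1))}

lemma zero_mem_chainSet (a : N) : 0 ∈ chainSet a :=
  ⟨fun _ => a, rfl, fun i hi => absurd hi (Nat.not_lt_zero i)⟩

lemma chain_jle {a : N} {n : ℕ} {c : ℕ → N} (h0 : c 0 = a)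
    (hc : ∀ i < n, jlt (c i) (c (i + 1))) : ∀ i ≤ n, jle a (c i) := by
  intro i hi
  induction i with
  | zero => rw [h0]; exact jle_refl' a
  | succ j ihj => exact jle_trans' (ihj (by omega)) (hc j (by omega)).1

lemma chain_jlt {n : ℕ} {c : ℕ → N} (hc : ∀ i < n, jlt (c i) (c (i + 1))) :
    ∀ j ≤ n, ∀ i < j, jlt (c i) (c j) := by
  intro j
  induction j with
  | zero => omega
  | succ m ih =>
      intro hj i hi
      rcases Nat.lt_or_ge i m with h | h
      · exact jlt_trans' (ih (by omega) i h) (hc m (by omega))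
      · have : i = m := by omega
        subst this
        exact hc i (by omega)

lemma chainSet_bddAbove (a : N) (hfin : {b : N | jle a b}.Finite) :
    BddAbove (chainSet a) := by
  classical
  refine ⟨hfin.toFinset.card, fun n hn => ?_⟩
  obtain ⟨c, h0, hc⟩ := hn
  have hinj : Set.InjOn c (Finset.range (n + 1)) := by
    intro i hi j hj hij
    simp only [Finset.coe_range, Set.mem_Iio] at hi hj
    by_contra hne
    rcases Nat.lt_or_ge i j with h | h
    · have := chain_jlt hc j (by omega) i h
      exact this.2 (hij ▸ jle_refl' (c i))
    · have hji : j < i := by omega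
      have := chain_jlt hc i (by omega) j hji
      exact this.2 (hij ▸ jle_refl' (c i))
  have hsub : (Finset.range (n + 1)).image c ⊆ hfin.toFinset := by
    intro x hx
    simp only [Finset.mem_image, Finset.mem_range] at hx
    obtain ⟨i, hi, rfl⟩ := hx
    simp only [Set.Finite.mem_toFinset, Set.mem_setOf_eq]
    exact chain_jle h0 hc i (by omega)
  have hcard := Finset.card_le_card hsub
  rw [Finset.card_image_of_injOn hinj, Finset.card_range] at hcard
  omega

end Aux

section Height

variable {N : Type*} [Monoid N] (hfin : ∀ a : N, {b : N | jle a b}.Finite)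
  (hJ : N → ℕ) (hhJ : ∀ a : N, hJ a = sSup (chainSet a))

include hfin hhJ

lemma hJ_mem (a : N) : hJ a ∈ chainSet a := by
  rw [hhJ]
  exact Nat.sSup_mem ⟨0, zero_mem_chainSet a⟩ (chainSet_bddAbove a (hfin a))

lemma le_hJ {a : N} {n : ℕ} (hn : n ∈ chainSet a) : n ≤ hJ a := by
  rw [hhJ]
  exact le_csSup (chainSet_bddAbove a (hfin a)) hn

lemma hJ_le_of_jle {a b : N} (h : jle a b) : hJ b ≤ hJ a := by
  obtain ⟨c, h0, hc⟩ := hJ_mem hfin hJ hhJ b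
  rcases Nat.eq_zero_or_pos (hJ b) with h0' | hpos
  · omega
  · refine le_hJ hfin hJ hhJ (a := a) ?_
    refine ⟨fun i => if i = 0 then a else c i, by simp, ?_⟩
    intro i hi
    rcases Nat.eq_zero_or_pos i with rfl | hip
    · simp only [if_pos rfl, if_neg one_ne_zero]
      have h01 := hc 0 hpos
      rw [h0] at h01
      exact ⟨jle_trans' h h01.1, fun hca => h01.2 (jle_trans' hca h)⟩
    · have h1 : i ≠ 0 := by omega
      have h2 : i + 1 ≠ 0 := by omega
      simp only [if_neg h1, if_neg h2]
      exact hc i hi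

lemma hJ_lt_of_jlt {a b : N} (h : jlt a b) : hJ b < hJ a := by
  obtain ⟨c, h0, hc⟩ := hJ_mem hfin hJ hhJ b
  have hmem : hJ b + 1 ∈ chainSet a := by
    refine ⟨fun i => if i = 0 then a else c (i - 1), by simp, ?_⟩
    intro i hi
    rcases Nat.eq_zero_or_pos i with rfl | hip
    · simp only [if_pos rfl, if_neg one_ne_zero]
      simpa [h0] using h
    · have h1 : i ≠ 0 := by omega
      have h2 : i + 1 ≠ 0 := by omega
      simp only [if_neg h1, if_neg h2]
      have := hc (i - 1) (by omega)
      have heq : i - 1 + 1 = i := by omega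
      rw [heq] at this
      have heq2 : i + 1 - 1 = i := by omega
      rw [heq2]
      exact this
  have := le_hJ hfin hJ hhJ hmem
  omega

lemma hJ_eq_of_jrel {a b : N} (h : jrel a b) : hJ a = hJ b :=
  le_antisymm (hJ_le_of_jle hfin hJ hhJ h.2) (hJ_le_of_jle hfin hJ hhJ h.1)

end Height

section StructLemma

variable {M : Type*} [Semigroup M]

lemma struct_list (Y : Set M) :
    ∀ l : List (WithOne M), l ≠ [] → (∀ x ∈ l, ∃ y ∈ Y, x = (↑y : WithOne M)) →
    ∃ s : WithOne M, jrel s l.prod ∧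
      ((∃ y ∈ Y, s = (↑y : WithOne M)) ∨
        ∃ y ∈ Y, ∃ t : WithOne M, s = ↑y * t ∧ jlt s t) := by
  intro l
  induction l with
  | nil => simp
  | cons x L ih =>
      intro _ hmem
      cases L with
      | nil =>
          refine ⟨x, ?_, Or.inl (hmem x (by simp))⟩
          simp only [List.prod_cons, List.prod_nil, mul_one]
          exact jrel_refl' x
      | cons z l' =>
          have hLne : (z :: l') ≠ [] := by simp
          have hprod : (x :: z :: l').prod = x * (z :: l').prod := List.prod_cons
          have hle : jle ((x :: z :: l').prod) ((z :: l').prod) :=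
            ⟨x, 1, by rw [hprod, mul_one]⟩
          by_cases hcase : jle ((z :: l').prod) ((x :: z :: l').prod)
          · obtain ⟨s, hs, hd⟩ := ih hLne (fun w hw => hmem w (by simp [hw]))
            exact ⟨s, jrel_trans' hs ⟨hcase, hle⟩, hd⟩
          · obtain ⟨y, hy, hxy⟩ := hmem x (by simp)
            refine ⟨(x :: z :: l').prod, jrel_refl' _,
              Or.inr ⟨y, hy, (z :: l').prod, by rw [hprod, hxy], ⟨hle, hcase⟩⟩⟩

lemma exists_list {Y : Set M} {m : M} (hm : m ∈ Subsemigroup.closure Y) :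
    ∃ l : List (WithOne M), l ≠ [] ∧ (∀ x ∈ l, ∃ y ∈ Y, x = (↑y : WithOne M)) ∧
      (↑m : WithOne M) = l.prod := by
  induction hm using Subsemigroup.closure_induction with
  | mem x hx =>
      refine ⟨[↑x], by simp, fun w hw => ?_, by simp⟩
      simp only [List.mem_singleton] at hw
      exact ⟨x, hx, hw⟩
  | mul a b ha hb iha ihb =>
      obtain ⟨l1, h1, hm1, he1⟩ := iha
      obtain ⟨l2, h2, hm2, he2⟩ := ihb
      refine ⟨l1 ++ l2, by simp [h1], fun x hx => ?_, ?_⟩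
      · rcases List.mem_append.1 hx with h | h
        · exact hm1 x h
        · exact hm2 x h
      · rw [List.prod_append, ← he1, ← he2, WithOne.coe_mul]

end StructLemma

open GreenDefs in
/-- If `M` is a semigroup generated by a finite set `Y` and the monoid
`N = M ∪ {I}` (obtained by adjoining a new identity) is finite `J`-above, then for
every `k` the set of elements of `N` of `J`-height `k` is finite. -/
theorem stmt_18 {M : Type*} [Semigroup M] (Y : Set M) (hYfin : Y.Finite)
    (hgen : Subsemigroup.closure Y = ⊤)
    (hfin : ∀ a : WithOne M, {b : WithOne M | jle a b}.Finite)
    (hJ : WithOne M → ℕ)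
    (hhJ : ∀ a : WithOne M, hJ a =
      sSup {n : ℕ | ∃ c : ℕ → WithOne M, c 0 = a ∧ ∀ i < n, jlt (c i) (c (i + 1))})
    (k : ℕ) :
    {m : WithOne M | hJ m = k}.Finite := by
  have hhJ' : ∀ a : WithOne M, hJ a = sSup (chainSet a) := hhJ
  induction k using Nat.strong_induction_on with
  | _ k IH =>
  classical
  have hB : {b : WithOne M | hJ b < k}.Finite := by
    have heq : {b : WithOne M | hJ b < k} = ⋃ j ∈ Finset.range k, {m | hJ m = j} := by
      ext b
      simp only [Set.mem_setOf_eq, Set.mem_iUnion, Finset.mem_range]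
      constructor
      · intro h; exact ⟨hJ b, h, rfl⟩
      · rintro ⟨j, hj, h⟩; omega
    rw [heq]
    exact Set.Finite.biUnion (Finset.range k).finite_toSet
      (fun j hj => IH j (Finset.mem_range.1 hj))
  have hY' : ((fun y : M => (↑y : WithOne M)) '' Y).Finite := hYfin.image _
  have hS : ((fun p : M × WithOne M => (↑p.1 : WithOne M) * p.2) ''
      (Y ×ˢ {b : WithOne M | hJ b < k})).Finite := (hYfin.prod hB).image _
  apply Set.Finite.subset (Set.Finite.union (Set.Finite.union (Set.finite_singleton 1)
    (Set.Finite.biUnion hY' (fun s _ => hfin s)))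
    (Set.Finite.biUnion hS (fun s _ => hfin s)))
  intro m hm
  rcases eq_or_ne m 1 with rfl | hne
  · exact Or.inl (Or.inl rfl)
  · obtain ⟨m₀, rfl⟩ := WithOne.ne_one_iff_exists.1 hne
    have hm₀ : m₀ ∈ Subsemigroup.closure Y := by rw [hgen]; trivial
    obtain ⟨l, hlne, hlmem, hlprod⟩ := exists_list hm₀
    obtain ⟨s, hs, hd⟩ := struct_list Y l hlne hlmem
    rw [← hlprod] at hs
    have hsle : jle s ↑m₀ := hs.1
    rcases hd with ⟨y, hy, rfl⟩ | ⟨y, hy, t, rfl, hlt⟩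
    · exact Or.inl (Or.inr (Set.mem_biUnion ⟨y, hy, rfl⟩ hsle))
    · have hteq : hJ ((↑y : WithOne M) * t) = hJ (↑m₀ : WithOne M) :=
        hJ_eq_of_jrel hfin hJ hhJ' hs
      have hmk : hJ (↑m₀ : WithOne M) = k := hm
      have htlt : hJ t < k := by
        have := hJ_lt_of_jlt hfin hJ hhJ' hlt
        omega
      exact Or.inr (Set.mem_biUnion ⟨(y, t), ⟨hy, htlt⟩, rfl⟩ hsle)
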